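/- arXiv:2505.18329 — 5 statements merged into one kernel-verified Lean document; each statement's English description precedes it below -/
import Mathlib

section
/- Let C be a category with binary products and let c be an object of C. Then the coKleisli category of the comonad on C whose underlying functor is c ⨯ −, with counit the second projection c ⨯ x ⟶ x and comultiplication (π_c, 𝟙_{c ⨯ x}) : c ⨯ x ⟶ c ⨯ (c ⨯ x) induced by the diagonal of c, is equivalent to the full subcategory of the slice category Over c spanned by the product projections c ⨯ x ⟶ c. Under this equivalence an object x of the coKleisli category corresponds to the projection c ⨯ x ⟶ c, and a coKleisli morphism f : c ⨯ x ⟶ y corresponds to the morphism (π_c, f) : c ⨯ x ⟶ c ⨯ y over c. -/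
open CategoryTheory CategoryTheory.Limits

universe v u

variable {C : Type u} [Category.{v} C] [HasBinaryProducts C]

/-- The predicate on `Over c` singling out the product projections `c ⨯ x ⟶ c`. -/
def IsProdProjection (c : C) (p : Over c) : Prop :=
  ∃ x : C, Nonempty (p ≅ Over.mk (prod.fst : c ⨯ x ⟶ c))

/-- The comparison functor from the coKleisli category of the comonad `c ⨯ -` (with counit
the second projection `c ⨯ x ⟶ x` and comultiplication `(π_c, 𝟙) : c ⨯ x ⟶ c ⨯ (c ⨯ x)`
induced by the diagonal of `c`; this is Mathlib's `prodComonad c`) to the full subcategory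
of `Over c` spanned by the product projections `c ⨯ x ⟶ c`; it sends an object `x` to the
projection `c ⨯ x ⟶ c` and a coKleisli morphism `f : c ⨯ x ⟶ y` to
`(π_c, f) : c ⨯ x ⟶ c ⨯ y` over `c`. -/
noncomputable def cokleisliToProj (c : C) :
    Cokleisli (prodComonad c) ⥤ ObjectProperty.FullSubcategory (IsProdProjection c) where
  obj x := ⟨Over.mk (prod.fst : c ⨯ x.of ⟶ c), ⟨x.of, ⟨Iso.refl _⟩⟩⟩
  map {x y} f := ObjectProperty.homMk (Over.homMk (prod.lift (prod.fst : c ⨯ x.of ⟶ c) (f.of : c ⨯ x.of ⟶ y.of)) (prod.lift_fst _ _))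
  map_id x := by
    apply ObjectProperty.hom_ext
    apply Over.OverMorphism.ext
    show prod.lift prod.fst ((prodComonad c).ε.app x.of) = 𝟙 (c ⨯ x.of)
    simp [prodComonad]
  map_comp {x y z} f g := by
    apply ObjectProperty.hom_ext
    apply Over.OverMorphism.ext
    show prod.lift prod.fst ((prodComonad c).δ.app x.of ≫ (prodComonad c).map f.of ≫ g.of) =
      prod.lift prod.fst f.of ≫ prod.lift prod.fst g.of
    have key : ∀ {a b d : C} (F : c ⨯ a ⟶ b) (G : c ⨯ b ⟶ d),
        prod.lift prod.fst (prod.lift prod.fst (𝟙 (c ⨯ a)) ≫ prod.map (𝟙 c) F ≫ G) =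
          prod.lift prod.fst F ≫ prod.lift prod.fst G := by
      intro a b d F G
      rw [← Category.assoc, prod.lift_map, Category.comp_id, Category.id_comp, prod.comp_lift,
        prod.lift_fst]
    exact key f.of g.of

/-- The coKleisli category of the comonad `c ⨯ -` is equivalent to the full subcategory
of `Over c` spanned by the product projections `c ⨯ x ⟶ c`, via the functor sending an
object `x` to the projection `c ⨯ x ⟶ c` and a coKleisli morphism `f : c ⨯ x ⟶ y` to
`(π_c, f) : c ⨯ x ⟶ c ⨯ y` over `c`. -/
theorem cokleisliToProj_isEquivalence (c : C) : (cokleisliToProj c).IsEquivalence := by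
  have faithful : (cokleisliToProj c).Faithful := by
    constructor
    intro x y f g h
    apply Cokleisli.hom_ext
    have h' := congrArg (fun k => k.hom.left ≫ prod.snd) h
    erw [prod.lift_snd, prod.lift_snd] at h'
    exact h'
  have full : (cokleisliToProj c).Full := by
    constructor
    intro x y h
    refine ⟨⟨show ((c ⨯ x.of : C) ⟶ y.of) from h.hom.left ≫ (prod.snd : c ⨯ y.of ⟶ y.of)⟩, ?_⟩
    apply ObjectProperty.hom_ext
    apply Over.OverMorphism.ext
    show prod.lift prod.fst (h.hom.left ≫ prod.snd) = h.hom.left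
    have hw : h.hom.left ≫ (prod.fst : c ⨯ y.of ⟶ c) = prod.fst := Over.w h.hom
    apply Limits.prod.hom_ext
    · erw [prod.lift_fst]; exact hw.symm
    · erw [prod.lift_snd]; rfl
  have essSurj : (cokleisliToProj c).EssSurj := by
    constructor
    intro p
    obtain ⟨x, ⟨e⟩⟩ := p.2
    exact ⟨Cokleisli.mk _ x, ⟨(ObjectProperty.fullyFaithfulι _).preimageIso e.symm⟩⟩
  exact { }
end

section
/- Let p : E ⥤ B be a Grothendieck fibration. Then every commutative square ℓ' ≫ r = r' ≫ ℓ in E, in which ℓ' : w ⟶ x and ℓ : y ⟶ z are vertical morphisms (their images under p are isomorphisms) and r' : w ⟶ y and r : x ⟶ z are strongly cartesian morphisms, is a pullback square in E. -/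
open CategoryTheory CategoryTheory.Limits

universe v₁ v₂ u₁ u₂

/-- In a Grothendieck fibration `p : E ⥤ B`, every commutative square `ℓ' ≫ r = r' ≫ ℓ` in
`E` in which `ℓ'` and `ℓ` are vertical (their images under `p` are isomorphisms) and `r'`
and `r` are strongly cartesian is a pullback square in `E`. -/
theorem vert_cart_square_isPullback {B : Type u₁} {E : Type u₂}
    [Category.{v₁} B] [Category.{v₂} E] (p : E ⥤ B) [p.IsFibered]
    {w x y z : E} (ℓ' : w ⟶ x) (r' : w ⟶ y) (r : x ⟶ z) (ℓ : y ⟶ z)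
    (hcomm : ℓ' ≫ r = r' ≫ ℓ)
    (hℓ' : IsIso (p.map ℓ')) (hℓ : IsIso (p.map ℓ))
    (hr' : p.IsStronglyCartesian (p.map r') r')
    (hr : p.IsStronglyCartesian (p.map r) r) :
    IsPullback ℓ' r' r ℓ := by
  have hbase : p.map ℓ' ≫ p.map r = p.map r' ≫ p.map ℓ := by
    rw [← p.map_comp, ← p.map_comp, hcomm]
  have hr'eq : p.map r' = p.map ℓ' ≫ p.map r ≫ inv (p.map ℓ) := by
    rw [← Category.assoc, hbase]; simp
  have hcond : ∀ s : PullbackCone r ℓ,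
      p.map s.snd = (p.map s.fst ≫ inv (p.map ℓ')) ≫ p.map r' := by
    intro s
    rw [hr'eq, Category.assoc, IsIso.inv_hom_id_assoc, ← Category.assoc,
      ← p.map_comp, s.condition, p.map_comp, Category.assoc, IsIso.hom_inv_id,
      Category.comp_id]
  refine IsPullback.of_isLimit' ⟨hcomm⟩ ?_
  refine PullbackCone.IsLimit.mk _
    (fun s => Functor.IsStronglyCartesian.map p (p.map r') r' (hcond s) s.snd) ?_ ?_ ?_
  · -- fac left : lift ≫ ℓ' = s.fst
    intro s
    set t := Functor.IsStronglyCartesian.map p (p.map r') r' (hcond s) s.snd with ht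
    have h1 : t ≫ r' = s.snd := Functor.IsStronglyCartesian.fac p _ _ _ _
    have hlift : p.IsHomLift (p.map s.fst) (t ≫ ℓ') := by
      have : p.IsHomLift ((p.map s.fst ≫ inv (p.map ℓ')) ≫ p.map ℓ') (t ≫ ℓ') := by
        infer_instance
      simpa using this
    apply Functor.IsStronglyCartesian.ext p (p.map r) r (p.map s.fst)
      (ψ := t ≫ ℓ') (ψ' := s.fst)
    rw [Category.assoc, hcomm, ← Category.assoc, h1, s.condition]
  · -- fac right
    intro s
    exact Functor.IsStronglyCartesian.fac p _ _ _ _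
  · intro s m hm1 hm2
    set t := Functor.IsStronglyCartesian.map p (p.map r') r' (hcond s) s.snd with ht
    have h1 : t ≫ r' = s.snd := Functor.IsStronglyCartesian.fac p _ _ _ _
    have hmlift : p.IsHomLift (p.map s.fst ≫ inv (p.map ℓ')) m := by
      have hpm : p.map m = p.map s.fst ≫ inv (p.map ℓ') := by
        rw [IsIso.eq_comp_inv, ← p.map_comp, hm1]
      rw [← hpm]; infer_instance
    have htlift : p.IsHomLift (p.map s.fst ≫ inv (p.map ℓ')) t :=
      Functor.IsStronglyCartesian.map_isHomLift p _ _ _ _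
    apply Functor.IsStronglyCartesian.ext p (p.map r') r'
      (p.map s.fst ≫ inv (p.map ℓ')) (ψ := m) (ψ' := t)
    rw [h1, hm2]
end

section
/- Let C be a monoidal category with finite products such that the monoidal unit 𝟙_C is a terminal object and the tensor product functor ⊗ : C × C ⥤ C preserves finite products. Then the tensor product functor is naturally isomorphic to the cartesian product functor; in particular there are isomorphisms X ⊗ Y ≅ X ⨯ Y natural in X and Y. -/
open CategoryTheory CategoryTheory.Limits CategoryTheory.MonoidalCategory

universe v u

section Aux

variable {D : Type*} [Category D]

/-- Composing the legs of a limit binary fan with isomorphisms yields a limit binary fan. -/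
noncomputable def binaryFanCompIsoIsLimit {P A B A' B' : D} (f : P ⟶ A) (g : P ⟶ B)
    (i : A ≅ A') (j : B ≅ B')
    (h : IsLimit (BinaryFan.mk f g)) : IsLimit (BinaryFan.mk (f ≫ i.hom) (g ≫ j.hom)) :=
  BinaryFan.isLimitMk
    (fun s => h.lift (BinaryFan.mk (s.fst ≫ i.inv) (s.snd ≫ j.inv)))
    (fun s => by
      have hf := h.fac (BinaryFan.mk (s.fst ≫ i.inv) (s.snd ≫ j.inv)) ⟨WalkingPair.left⟩
      simp only [BinaryFan.mk_fst, BinaryFan.π_app_left] at hf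
      rw [← Category.assoc]; exact (congrArg (· ≫ i.hom) hf).trans
        ((Category.assoc _ _ _).trans ((congrArg (fun k => s.fst ≫ k) i.inv_hom_id).trans (Category.comp_id _))))
    (fun s => by
      have hf := h.fac (BinaryFan.mk (s.fst ≫ i.inv) (s.snd ≫ j.inv)) ⟨WalkingPair.right⟩
      simp only [BinaryFan.mk_snd, BinaryFan.π_app_right] at hf
      rw [← Category.assoc]; exact (congrArg (· ≫ j.hom) hf).trans
        ((Category.assoc _ _ _).trans ((congrArg (fun k => s.snd ≫ k) j.inv_hom_id).trans (Category.comp_id _))))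
    (fun s m h1 h2 => by
      apply BinaryFan.IsLimit.hom_ext h
      · have hf := h.fac (BinaryFan.mk (s.fst ≫ i.inv) (s.snd ≫ j.inv)) ⟨WalkingPair.left⟩
        simp only [BinaryFan.mk_fst, BinaryFan.π_app_left] at hf ⊢
        rw [hf, ← h1]; simp
      · have hf := h.fac (BinaryFan.mk (s.fst ≫ i.inv) (s.snd ≫ j.inv)) ⟨WalkingPair.right⟩
        simp only [BinaryFan.mk_snd, BinaryFan.π_app_right] at hf ⊢
        rw [hf, ← h2]; simp)

end Aux

section Main

variable (C : Type u) [Category.{v} C] [MonoidalCategory C]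
    [HasFiniteProducts C] (hunit : IsTerminal (𝟙_ C))
    [PreservesFiniteProducts (MonoidalCategory.tensor C)]

/-- The fan `(X, Y) ⟶ (X, 𝟙), (X, Y) ⟶ (𝟙, Y)` is a limit binary fan in `C × C`. -/
noncomputable def fanIsLimit (X Y : C) :
    IsLimit (BinaryFan.mk (P := ((X, Y) : C × C))
      ((𝟙 X, hunit.from Y) : (X, Y) ⟶ (X, 𝟙_ C))
      ((hunit.from X, 𝟙 Y) : (X, Y) ⟶ (𝟙_ C, Y))) :=
  BinaryFan.isLimitMk
    (fun s => (s.fst.1, s.snd.2))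
    (fun s => by
      ext
      · simp
      · exact hunit.hom_ext _ _)
    (fun s => by
      ext
      · exact hunit.hom_ext _ _
      · simp)
    (fun s m h1 h2 => by
      ext
      · simpa using congrArg Prod.fst h1
      · simpa using congrArg Prod.snd h2)

/-- The limit fan `X ⊗ Y ⟶ X`, `X ⊗ Y ⟶ Y`. -/
noncomputable def tensorFanIsLimit (X Y : C) :
    IsLimit (BinaryFan.mk
      ((𝟙 X ⊗ₘ hunit.from Y) ≫ (ρ_ X).hom)
      ((hunit.from X ⊗ₘ 𝟙 Y) ≫ (λ_ Y).hom)) :=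
  binaryFanCompIsoIsLimit _ _ (ρ_ X) (λ_ Y)
    (mapIsLimitOfPreservesOfIsLimit (MonoidalCategory.tensor C) _ _ (fanIsLimit C hunit X Y))

/-- If `C` is a monoidal category with finite products whose monoidal unit is terminal and
whose tensor product functor `⊗ : C × C ⥤ C` preserves finite products, then the tensor
product functor is naturally isomorphic to the cartesian product functor; in particular
there are isomorphisms `X ⊗ Y ≅ X ⨯ Y` natural in `X` and `Y`. -/
theorem tensor_iso_prod (C : Type u) [Category.{v} C] [MonoidalCategory C]
    [HasFiniteProducts C] (hunit : IsTerminal (𝟙_ C))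
    [PreservesFiniteProducts (MonoidalCategory.tensor C)] :
    Nonempty (MonoidalCategory.tensor C ≅ Functor.uncurry.obj Limits.prod.functor) := by
  refine ⟨NatIso.ofComponents (fun X =>
    IsLimit.conePointUniqueUpToIso (tensorFanIsLimit C hunit X.1 X.2)
      (limit.isLimit (pair X.1 X.2))) ?_⟩
  rintro ⟨X, Y⟩ ⟨X', Y'⟩ ⟨f, g⟩
  apply Limits.prod.hom_ext
  · have h1 := IsLimit.conePointUniqueUpToIso_hom_comp (tensorFanIsLimit C hunit X Y)
      (limit.isLimit (pair X Y)) ⟨WalkingPair.left⟩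
    have h2 := IsLimit.conePointUniqueUpToIso_hom_comp (tensorFanIsLimit C hunit X' Y')
      (limit.isLimit (pair X' Y')) ⟨WalkingPair.left⟩
    simp only [BinaryFan.π_app_left, BinaryFan.mk_fst, limit.cone_π] at h1 h2
    generalize (tensorFanIsLimit C hunit X Y).conePointUniqueUpToIso (limit.isLimit (pair X Y)) = e at h1 ⊢
    generalize (tensorFanIsLimit C hunit X' Y').conePointUniqueUpToIso (limit.isLimit (pair X' Y')) = e' at h2 ⊢
    change X ⊗ Y ≅ X ⨯ Y at e
    change X' ⊗ Y' ≅ X' ⨯ Y' at e'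
    change e.hom ≫ prod.fst = _ at h1
    change e'.hom ≫ prod.fst = _ at h2
    change ((f ⊗ₘ g) ≫ e'.hom) ≫ prod.fst = (e.hom ≫ prod.map f (𝟙 Y) ≫ prod.map (𝟙 X') g) ≫ prod.fst
    simp [h1, h2, reassoc_of% h1, reassoc_of% h2]
    slice_lhs 1 2 => rw [← MonoidalCategory.id_tensorHom, MonoidalCategory.tensorHom_comp_tensorHom, Category.comp_id,
      hunit.hom_ext (g ≫ hunit.from Y') (hunit.from Y),
      ← Category.id_comp f, ← Category.comp_id (hunit.from Y), ← MonoidalCategory.tensorHom_comp_tensorHom]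
    simp
  · have h1 := IsLimit.conePointUniqueUpToIso_hom_comp (tensorFanIsLimit C hunit X Y)
      (limit.isLimit (pair X Y)) ⟨WalkingPair.right⟩
    have h2 := IsLimit.conePointUniqueUpToIso_hom_comp (tensorFanIsLimit C hunit X' Y')
      (limit.isLimit (pair X' Y')) ⟨WalkingPair.right⟩
    simp only [BinaryFan.π_app_right, BinaryFan.mk_snd, limit.cone_π] at h1 h2
    generalize (tensorFanIsLimit C hunit X Y).conePointUniqueUpToIso (limit.isLimit (pair X Y)) = e at h1 ⊢
    generalize (tensorFanIsLimit C hunit X' Y').conePointUniqueUpToIso (limit.isLimit (pair X' Y')) = e' at h2 ⊢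
    change X ⊗ Y ≅ X ⨯ Y at e
    change X' ⊗ Y' ≅ X' ⨯ Y' at e'
    change e.hom ≫ prod.snd = _ at h1
    change e'.hom ≫ prod.snd = _ at h2
    change ((f ⊗ₘ g) ≫ e'.hom) ≫ prod.snd = (e.hom ≫ prod.map f (𝟙 Y) ≫ prod.map (𝟙 X') g) ≫ prod.snd
    simp [h1, h2, reassoc_of% h1, reassoc_of% h2]
    slice_lhs 1 2 => rw [← MonoidalCategory.tensorHom_id, MonoidalCategory.tensorHom_comp_tensorHom, Category.comp_id,
      hunit.hom_ext (f ≫ hunit.from X') (hunit.from X),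
      ← Category.id_comp g, ← Category.comp_id (hunit.from X), ← MonoidalCategory.tensorHom_comp_tensorHom]
    simp

end Main
end

section
/- Let C be a category with finite products. Evaluation at a one-element finite set induces an equivalence of categories between the full subcategory of the functor category FinSetᵒᵖ ⥤ C spanned by the finite-product-preserving functors and C. (That is, FinSetᵒᵖ is the free category with finite products on one object.) -/
open CategoryTheory CategoryTheory.Limits

universe w v u

namespace FreeFinProd

open Opposite

variable {C : Type u} [Category.{v} C] [HasFiniteProducts C]

/-- The one-element finite set. -/
abbrev unitF : FintypeCat.{w} := FintypeCat.of PUnit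

/-- The map from the one-element set picking out `s`. -/
def inc {S : FintypeCat.{w}} (s : S) : unitF ⟶ S := FintypeCat.homMk fun _ => s

/-- The fan exhibiting `op S` as the product of `S`-many copies of `op unitF`. -/
def ptFan (S : FintypeCat.{w}) : Fan (fun _ : S => op unitF) :=
  Fan.mk (op S) (fun s => (inc s).op)

/-- `ptFan` is a limit fan. -/
def ptFanIsLimit (S : FintypeCat.{w}) : IsLimit (ptFan S) :=
  mkFanLimit _
    (fun s => Quiver.Hom.op (FintypeCat.homMk fun x : S => (s.proj x).unop PUnit.unit))
    (fun s j => by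
      apply Quiver.Hom.unop_inj
      ext x
      rfl)
    (fun s m hm => by
      apply Quiver.Hom.unop_inj
      ext x
      have := hm x
      apply_fun (fun (g : s.pt ⟶ op unitF) => g.unop PUnit.unit) at this
      exact this.symm ▸ rfl)

/-- For a finite-product-preserving `F`, `F (op S)` is the product of `S` copies of
`F (op unitF)`. -/
noncomputable def mapPtFanIsLimit (F : FintypeCat.{w}ᵒᵖ ⥤ C) [PreservesFiniteProducts F]
    (S : FintypeCat.{w}) :
    IsLimit (Fan.mk (F.obj (op S)) (fun s : S => F.map (inc s).op)) :=
  isLimitFanMkObjOfIsLimit F _ _ (ptFanIsLimit S)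

theorem hom_ext_into (G : FintypeCat.{w}ᵒᵖ ⥤ C) [PreservesFiniteProducts G] {S : FintypeCat.{w}}
    {Y : C} {a b : Y ⟶ G.obj (op S)}
    (h : ∀ s : S, a ≫ G.map (inc s).op = b ≫ G.map (inc s).op) : a = b :=
  (mapPtFanIsLimit G S).hom_ext (fun ⟨s⟩ => h s)

/-- Extension of a morphism between values at the point to a natural transformation. -/
noncomputable def extendHom (F G : FintypeCat.{w}ᵒᵖ ⥤ C) [PreservesFiniteProducts F]
    [PreservesFiniteProducts G] (h : F.obj (op unitF) ⟶ G.obj (op unitF)) : F ⟶ G where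
  app S := (mapPtFanIsLimit G S.unop).lift
    (Fan.mk (F.obj S) (fun s : S.unop => F.map (inc s).op ≫ h))
  naturality {S T} f := by
    apply hom_ext_into G
    intro t
    have h1 := (mapPtFanIsLimit G T.unop).fac
      (Fan.mk (F.obj T) (fun s : T.unop => F.map (inc s).op ≫ h)) ⟨t⟩
    have h2 := (mapPtFanIsLimit G S.unop).fac
      (Fan.mk (F.obj S) (fun s : S.unop => F.map (inc s).op ≫ h)) ⟨f.unop t⟩
    have e : f ≫ (inc t).op = (inc (f.unop t)).op := rfl
    dsimp at h1 h2 ⊢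
    simp only [Category.assoc]
    rw [h1, ← G.map_comp, e, h2, ← e, F.map_comp, Category.assoc]

theorem extendHom_app_unit (F G : FintypeCat.{w}ᵒᵖ ⥤ C) [PreservesFiniteProducts F]
    [PreservesFiniteProducts G] (h : F.obj (op unitF) ⟶ G.obj (op unitF)) :
    (extendHom F G h).app (op unitF) = h := by
  have h1 := (mapPtFanIsLimit G unitF).fac
    (Fan.mk (F.obj (op unitF)) (fun s : unitF => F.map (inc s).op ≫ h)) ⟨PUnit.unit⟩
  dsimp at h1
  have e : inc (PUnit.unit) = 𝟙 unitF := rfl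
  rw [e] at h1
  simpa [extendHom] using h1

/-- The "power" functor `S ↦ X^S`. -/
noncomputable def pow (X : C) : FintypeCat.{w}ᵒᵖ ⥤ C where
  obj S := ∏ᶜ (fun _ : S.unop => X)
  map {S T} f := Pi.lift (fun t : T.unop => Pi.π (fun _ : S.unop => X) (f.unop t))
  map_id S := by
    apply Pi.hom_ext
    intro t
    simp
  map_comp {S T U} f g := by
    apply Pi.hom_ext
    intro u
    simp

/-- The fan exhibiting a sigma type as a product in `FintypeCatᵒᵖ`. -/
def sigmaFan {J : Type} [Fintype J] (f : J → FintypeCat.{w}ᵒᵖ) : Fan f :=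
  Fan.mk (op (FintypeCat.of (Σ j, ((f j).unop : Type w))))
    (fun j => Quiver.Hom.op (FintypeCat.homMk fun x : (f j).unop => (⟨j, x⟩ : Σ j, ((f j).unop : Type w))))

def sigmaFanIsLimit {J : Type} [Fintype J] (f : J → FintypeCat.{w}ᵒᵖ) : IsLimit (sigmaFan f) :=
  mkFanLimit _
    (fun s => Quiver.Hom.op (FintypeCat.homMk fun p : (Σ j, ((f j).unop : Type w)) => (s.proj p.1).unop p.2))
    (fun s j => by
      apply Quiver.Hom.unop_inj
      ext x
      rfl)
    (fun s m hm => by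
      apply Quiver.Hom.unop_inj
      ext p
      have := hm p.1
      apply_fun (fun (g : s.pt ⟶ f p.1) => g.unop p.2) at this
      exact this.symm ▸ rfl)

instance powPreserves (X : C) : PreservesFiniteProducts (pow X : FintypeCat.{w}ᵒᵖ ⥤ C) := by
  constructor
  intro n
  suffices ∀ (J : Type) [Fintype J], PreservesLimitsOfShape (Discrete J) (pow X) from this _
  intro J _
  constructor
  intro K
  have key : PreservesLimit (Discrete.functor (K.obj ∘ Discrete.mk)) (pow X) := by
    set f : J → FintypeCat.{w}ᵒᵖ := K.obj ∘ Discrete.mk with hf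
    refine preservesLimit_of_preserves_limit_cone (sigmaFanIsLimit f)
      ((isLimitMapConeFanMkEquiv (pow X) f _).symm ?_)
    refine mkFanLimit _
      (fun s => Pi.lift (fun p : (Σ j, ((f j).unop : Type w)) =>
        s.proj p.1 ≫ Pi.π (fun _ : (f p.1).unop => X) p.2)) ?_ ?_
    · intro s j
      refine Pi.hom_ext _ _ fun t => ?_
      simp only [Fan.mk_pt, fan_mk_proj, Category.assoc, pow, Pi.lift_π]
      rfl
    · intro s m hm
      have hm' : ∀ (j : J) (t : (f j).unop),
          m ≫ Pi.π (fun _ : ((FintypeCat.of (Σ j, ((f j).unop : Type w))) : Type w) => X) ⟨j, t⟩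
            = s.proj j ≫ Pi.π (fun _ : (f j).unop => X) t := by
        intro j t
        have h := hm j
        replace h := congrArg (fun (g : s.pt ⟶ ∏ᶜ (fun _ : (f j).unop => X)) => g ≫ Pi.π (fun _ : (f j).unop => X) t) h
        simp only [Fan.mk_pt, fan_mk_proj, pow] at h
        erw [Category.assoc, Pi.lift_π] at h
        exact h
      show m = Pi.lift fun p : (Σ j, ((f j).unop : Type w)) =>
        s.proj p.1 ≫ Pi.π (fun _ : (f p.1).unop => X) p.2
      refine Pi.hom_ext (f := fun _ : ((FintypeCat.of (Σ j, ((f j).unop : Type w))) : Type w) => X) m _ fun p => ?_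
      exact (hm' p.1 p.2).trans
        (Pi.lift_π (fun p : (Σ j, ((f j).unop : Type w)) =>
          s.proj p.1 ≫ Pi.π (fun _ : (f p.1).unop => X) p.2) p).symm
  exact preservesLimit_of_iso_diagram _ Discrete.natIsoFunctor.symm

/-- The one-point product of `X` is isomorphic to `X`. -/
noncomputable def powUnitIso (X : C) : (pow X).obj (op unitF) ≅ X :=
  IsLimit.conePointUniqueUpToIso (limit.isLimit _)
    (mkFanLimit (Fan.mk X (fun _ : unitF => 𝟙 X))
      (fun s => s.proj PUnit.unit)
      (fun s j => by dsimp; rw [Category.comp_id])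
      (fun s m hm => by simpa using hm PUnit.unit))

end FreeFinProd

open FreeFinProd Opposite

/-- `FinSetᵒᵖ` is the free category with finite products on one object: for any category `C`
with finite products, evaluation at a one-element finite set induces an equivalence between
the full subcategory of `FinSetᵒᵖ ⥤ C` spanned by the finite-product-preserving functors
and `C`. -/
theorem evaluation_finiteProductPreserving_isEquivalence
    (C : Type u) [Category.{v} C] [HasFiniteProducts C] :
    (ObjectProperty.ι
        (fun F : FintypeCatᵒᵖ ⥤ C => PreservesFiniteProducts F) ⋙
      (evaluation FintypeCatᵒᵖ C).obj (Opposite.op (FintypeCat.of PUnit))).IsEquivalence := by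
  constructor
  · constructor
    intro F G α β hαβ
    have hF := F.property
    have hG := G.property
    apply ObjectProperty.hom_ext
    apply NatTrans.ext
    funext S
    apply hom_ext_into G.obj
    intro s
    have h1 := α.hom.naturality ((inc s).op : op S.unop ⟶ op unitF)
    have h2 := β.hom.naturality ((inc s).op : op S.unop ⟶ op unitF)
    dsimp at h1 h2 hαβ ⊢
    rw [← h1, ← h2, hαβ]
  · constructor
    intro F G h
    have hF := F.property
    have hG := G.property
    exact ⟨ObjectProperty.homMk (extendHom F.obj G.obj h), extendHom_app_unit F.obj G.obj h⟩
  · constructor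
    intro X
    exact ⟨⟨pow X, powPreserves X⟩, ⟨powUnitIso X⟩⟩
end

section
/- Let X be a type and let C be a category with finite colimits. Let FinSet ↓ X denote the category of X-typed finite sets, whose objects are finite sets I equipped with a typing function τ : I → X and whose morphisms are functions commuting with the typings. Then evaluation at the one-element typed sets (for each x : X, the singleton set typed by x) induces an equivalence of categories between the full subcategory of the functor category (FinSet ↓ X) ⥤ C spanned by the finite-colimit-preserving functors and the functor category Discrete X ⥤ C. (That is, FinSet ↓ X is the free finite-colimit completion of the discrete category on X.) -/
open CategoryTheory CategoryTheory.Limits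

universe v u w

/-- The category `FinSet ↓ X` of `X`-typed finite sets: finite sets `I` equipped with a
typing function `τ : I → X`, with morphisms the functions commuting with the typings. -/
abbrev TypedFinSet (X : Type u) : Type _ :=
  CostructuredArrow FintypeCat.incl X

/-- The one-element set typed by `x : X`. -/
def TypedFinSet.single {X : Type u} (x : X) : TypedFinSet X :=
  CostructuredArrow.mk (Y := FintypeCat.of PUnit) (TypeCat.ofHom fun _ => x)

namespace TFSAux

variable {X : Type u}

/-- The inclusion of the singleton typed by `I.hom i` into `I`. -/
def inj (I : TypedFinSet X) (i : I.left) : TypedFinSet.single (I.hom i) ⟶ I :=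
  CostructuredArrow.homMk (FintypeCat.homMk fun _ => i) rfl

lemma inj_left (I : TypedFinSet X) (i : I.left) (u : PUnit) : (inj I i).left u = i := rfl

lemma single_congr {x y : X} (h : x = y) : TypedFinSet.single x = TypedFinSet.single y := by
  rw [h]

lemma inj_comp {I J : TypedFinSet X} (f : I ⟶ J) (i : I.left) :
    inj I i ≫ f = eqToHom (single_congr (by
      conv_lhs => rw [← CostructuredArrow.w f]
      rfl)) ≫ inj J (f.left i) := by
  apply CostructuredArrow.hom_ext
  rw [CostructuredArrow.comp_left, CostructuredArrow.comp_left]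
  ext u
  rfl

/-- The cofan exhibiting `I` as coproduct of singletons. -/
def cofan (I : TypedFinSet X) : Cofan (fun i : I.left => TypedFinSet.single (I.hom i)) :=
  Cofan.mk I (inj I)

def isColimitCofan (I : TypedFinSet X) : IsColimit (cofan I) := by
  refine mkCofanColimit _ (fun t => CostructuredArrow.homMk
      (FintypeCat.homMk fun i => (t.inj i).left PUnit.unit) ?_) ?_ ?_
  · ext i
    exact ConcreteCategory.congr_hom (CostructuredArrow.w (t.inj i)) PUnit.unit
  · intro t j
    apply CostructuredArrow.hom_ext
    rw [CostructuredArrow.comp_left]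
    ext u
    rfl
  · intro t m hm
    apply CostructuredArrow.hom_ext
    ext i
    have := congrArg CommaMorphism.left (hm i)
    rw [CostructuredArrow.comp_left] at this
    exact ConcreteCategory.congr_hom this PUnit.unit

section

variable {C : Type w} [Category.{v} C] [HasFiniteColimits C]

/-- An abstract finite-colimit-preserving functor sends the singleton cofan to a colimit. -/
noncomputable def isColimitMapCofan (F : TypedFinSet X ⥤ C) [PreservesFiniteColimits F]
    (I : TypedFinSet X) : IsColimit (F.mapCocone (cofan I)) := by
  haveI : PreservesColimitsOfShape (Discrete (I.left : Type u)) F :=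
    preservesColimitsOfShape_of_equiv (Discrete.equivalence (Finite.equivFin I.left).symm) F
  exact isColimitOfPreserves F (isColimitCofan I)

lemma hom_app_eq {I J : TypedFinSet X} (f : I ⟶ J) (i : I.left) :
    I.hom i = J.hom (f.left i) := by
  conv_lhs => rw [← CostructuredArrow.w f]
  rfl

variable (G : Discrete X ⥤ C)

noncomputable abbrev ext : TypedFinSet X ⥤ C where
  obj I := ∐ (fun i : I.left => G.obj ⟨I.hom i⟩)
  map {I J} f := Sigma.desc (fun i =>
    eqToHom (congrArg G.obj (Discrete.ext (hom_app_eq f i))) ≫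
      Sigma.ι (fun j : J.left => G.obj ⟨J.hom j⟩) (f.left i))
  map_id I := by ext i; simp; erw [eqToHom_refl, Category.id_comp]
  map_comp {I J K} f g := by ext i; simp

section PreservesProof

variable {J : Type} [SmallCategory J] [FinCategory J] {K : J ⥤ TypedFinSet X}
variable (c : Cocone K)

local notation "D" => (K ⋙ CostructuredArrow.proj FintypeCat.incl X ⋙ FintypeCat.incl)

noncomputable def typeIsColimit (hc : IsColimit c) :
    IsColimit ((CostructuredArrow.proj FintypeCat.incl X ⋙ FintypeCat.incl).mapCocone c) := by
  haveI : HasColimit K := inferInstance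
  exact isColimitOfPreserves _ hc

abbrev ap (p : Σ j : J, ((K.obj j).left : Type u)) : (c.pt.left : Type u) :=
  (c.ι.app p.1).left p.2

lemma ap_hom (p : Σ j : J, ((K.obj j).left : Type u)) :
    c.pt.hom (ap c p) = (K.obj p.1).hom p.2 :=
  ConcreteCategory.congr_hom (CostructuredArrow.w (c.ι.app p.1)) p.2

lemma surj (hc : IsColimit c) (q : (c.pt.left : Type u)) :
    ∃ p : Σ j : J, ((K.obj j).left : Type u), ap c p = q := by
  obtain ⟨j, y, h⟩ := Types.jointly_surjective _ (typeIsColimit c hc) q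
  exact ⟨⟨j, y⟩, h⟩

lemma apeq {p p' : Σ j : J, ((K.obj j).left : Type u)}
    (h : Relation.EqvGen (Functor.ColimitTypeRel D) p p') : ap c p = ap c p' := by
  induction h with
  | rel p p' hr =>
      obtain ⟨j, i⟩ := p; obtain ⟨j', i'⟩ := p'
      obtain ⟨f, hf⟩ := hr
      have h2 := ConcreteCategory.congr_hom (congrArg CommaMorphism.left (c.w f)) i
      dsimp only at hf h2
      show (c.ι.app j).left i = (c.ι.app j').left i'
      rw [hf]
      exact h2.symm
  | refl p => rfl
  | symm p p' _ ih => exact ih.symm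
  | trans p p' p'' _ _ ih1 ih2 => exact ih1.trans ih2

lemma sound (hc : IsColimit c) {p p' : Σ j : J, ((K.obj j).left : Type u)}
    (h : ap c p = ap c p') : Relation.EqvGen (Functor.ColimitTypeRel D) p p' := by
  let e := (typeIsColimit c hc).coconePointUniqueUpToIso (colimit.isColimit D)
  have h1 : ∀ p : Σ j : J, ((K.obj j).left : Type u),
      colimit.ι D p.1 p.2 = e.hom (ap c p) := by
    intro p
    exact (ConcreteCategory.congr_hom ((typeIsColimit c hc).comp_coconePointUniqueUpToIso_hom
      (colimit.isColimit D) p.1) p.2).symm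
  exact Types.colimit_eq (F := D) (j := p.1) (x := p.2) (j' := p'.1) (x' := p'.2) (by rw [h1, h1, h])

variable (s : Cocone (K ⋙ ext G))

noncomputable def eH (j : J) (i : ((K.obj j).left : Type u)) :
    G.obj ⟨(K.obj j).hom i⟩ ⟶ s.pt :=
  Sigma.ι (fun i : (K.obj j).left => G.obj ⟨(K.obj j).hom i⟩) i ≫ s.ι.app j

lemma eH_nat {j j' : J} (f : j ⟶ j') (i : ((K.obj j).left : Type u)) :
    eH G s j i = eqToHom (congrArg G.obj (Discrete.ext (hom_app_eq (K.map f) i))) ≫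
      eH G s j' ((K.map f).left i) := by
  rw [eH, ← s.w f]
  show Sigma.ι _ i ≫ (ext G).map (K.map f) ≫ s.ι.app j' = _
  simp [eH, ext]

noncomputable def gH (p : Σ j : J, ((K.obj j).left : Type u)) :
    G.obj ⟨c.pt.hom (ap c p)⟩ ⟶ s.pt :=
  eqToHom (congrArg G.obj (Discrete.ext (ap_hom c p))) ≫ eH G s p.1 p.2

lemma gconst {p p' : Σ j : J, ((K.obj j).left : Type u)}
    (h : Relation.EqvGen (Functor.ColimitTypeRel D) p p') :
    ∀ (e : G.obj ⟨c.pt.hom (ap c p)⟩ = G.obj ⟨c.pt.hom (ap c p')⟩),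
      gH G c s p = eqToHom e ≫ gH G c s p' := by
  induction h with
  | rel p p' hr =>
      obtain ⟨j, i⟩ := p; obtain ⟨j', i'⟩ := p'
      obtain ⟨f, hf⟩ := hr
      dsimp only at hf f
      rw [hf]
      intro e
      simp only [gH, eH_nat G s f i]
      simp
      rfl
  | refl p => intro e; simp
  | symm p p' h ih =>
      intro e
      rw [ih (congrArg G.obj (Discrete.ext (congrArg c.pt.hom (apeq c h))))]
      simp
  | trans p p' p'' h1 h2 ih1 ih2 =>
      intro e
      rw [ih1 (congrArg G.obj (Discrete.ext (congrArg c.pt.hom (apeq c h1)))),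
        ih2 (congrArg G.obj (Discrete.ext (congrArg c.pt.hom (apeq c h2))))]
      simp

noncomputable def descAux (hc : IsColimit c) (q : (c.pt.left : Type u)) :
    G.obj ⟨c.pt.hom q⟩ ⟶ s.pt :=
  eqToHom (congrArg G.obj (Discrete.ext (congrArg c.pt.hom (surj c hc q).choose_spec.symm))) ≫
    gH G c s (surj c hc q).choose

lemma descAux_ap (hc : IsColimit c) (p : Σ j : J, ((K.obj j).left : Type u)) :
    descAux G c s hc (ap c p) = gH G c s p := by
  rw [descAux, gconst G c s (sound c hc (surj c hc (ap c p)).choose_spec)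
    (congrArg G.obj (Discrete.ext (congrArg c.pt.hom
      (apeq c (sound c hc (surj c hc (ap c p)).choose_spec)))))]
  simp

lemma ι_ext_map {I I' : TypedFinSet X} (f : I ⟶ I') (i : I.left) :
    Sigma.ι (fun i : I.left => G.obj ⟨I.hom i⟩) i ≫ (ext G).map f =
      eqToHom (congrArg G.obj (Discrete.ext (hom_app_eq f i))) ≫
        Sigma.ι (fun j : I'.left => G.obj ⟨I'.hom j⟩) (f.left i) := by
  simp [ext]

noncomputable def extMapIsColimit (hc : IsColimit c) : IsColimit ((ext G).mapCocone c) where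
  desc s := Sigma.desc (fun q => descAux G c s hc q)
  fac s j := by
    apply Sigma.hom_ext
    intro i
    simp only [Functor.mapCocone_ι_app, ← Category.assoc, ι_ext_map]
    simp only [Category.assoc, Sigma.ι_desc]
    rw [descAux_ap G c s hc ⟨j, i⟩, gH]
    simp [eH]
  uniq s m hm := by
    apply Sigma.hom_ext
    intro q
    obtain ⟨p, rfl⟩ := surj c hc q
    rw [Sigma.ι_desc, descAux_ap G c s hc p, gH]
    have h4 := hm p.1
    rw [Functor.mapCocone_ι_app] at h4
    have h5 : Sigma.ι (fun q : (c.pt.left : Type u) => G.obj ⟨c.pt.hom q⟩) (ap c p) =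
        eqToHom (congrArg G.obj (Discrete.ext (hom_app_eq (c.ι.app p.1) p.2))).symm ≫
          Sigma.ι (fun i : (K.obj p.1).left => G.obj ⟨(K.obj p.1).hom i⟩) p.2 ≫
            (ext G).map (c.ι.app p.1) := by
      rw [ι_ext_map]
      simp
    rw [h5, Category.assoc, Category.assoc]
    erw [h4]
    simp [eH]

end PreservesProof

noncomputable instance extPreservesFiniteColimits : PreservesFiniteColimits (ext G) where
  preservesFiniteColimits J _ _ :=
    { preservesColimit := fun {K} =>
        { preserves := fun {c} hc => ⟨extMapIsColimit G c hc⟩ } }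


/-- singletons include into each other via equality only -/
lemma inj_single (x : X) : inj (TypedFinSet.single x) PUnit.unit = 𝟙 (TypedFinSet.single x) := by
  apply CostructuredArrow.hom_ext
  ext u
  rfl

lemma map_eqToHom_comm {F F' : TypedFinSet X ⥤ C}
    (b : Discrete.functor (fun x : X => TypedFinSet.single x) ⋙ F ⟶
      Discrete.functor (fun x : X => TypedFinSet.single x) ⋙ F')
    {x y : X} (hx : x = y) (h : TypedFinSet.single x = TypedFinSet.single y) :
    F.map (eqToHom h) ≫ b.app ⟨y⟩ = b.app ⟨x⟩ ≫ F'.map (eqToHom h) := by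
  subst hx
  simp

end

section Main

variable (X : Type u) (C : Type w) [Category.{v} C] [HasFiniteColimits C]

/-- The evaluation functor of the theorem. -/
noncomputable abbrev E : ObjectProperty.FullSubcategory (fun F : TypedFinSet X ⥤ C => PreservesFiniteColimits F) ⥤
    (Discrete X ⥤ C) :=
  ObjectProperty.ι (fun F : TypedFinSet X ⥤ C => PreservesFiniteColimits F) ⋙
    (Functor.whiskeringLeft (Discrete X) (TypedFinSet X) C).obj
      (Discrete.functor fun x => TypedFinSet.single x)

lemma e_faithful : (E X C).Faithful := by
  constructor
  intro F F' α β h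
  haveI := F.property
  apply ObjectProperty.hom_ext
  apply NatTrans.ext
  funext I
  apply (isColimitMapCofan F.obj I).hom_ext
  rintro ⟨i⟩
  have hα := α.hom.naturality (inj I i)
  have hβ := β.hom.naturality (inj I i)
  have hcomp : ∀ (γ : F.obj ⟶ F'.obj) (x : X),
      ((E X C).map (ObjectProperty.homMk γ)).app ⟨x⟩ = γ.app (TypedFinSet.single x) := fun _ _ => rfl
  have hx := congr_arg (fun γ => NatTrans.app γ (⟨I.hom i⟩ : Discrete X)) h
  dsimp at hx
  show F.obj.map (inj I i) ≫ α.hom.app I = F.obj.map (inj I i) ≫ β.hom.app I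
  rw [hα, hβ, hx]

lemma e_full : (E X C).Full := by
  constructor
  rintro ⟨F, hF⟩ ⟨F', hF'⟩ b
  haveI : PreservesFiniteColimits F := hF
  let app : ∀ I : TypedFinSet X, F.obj I ⟶ F'.obj I := fun I =>
    (isColimitMapCofan F I).desc
      ⟨F'.obj I, Discrete.natTrans (fun i => b.app ⟨I.hom i.as⟩ ≫ F'.map (inj I i.as))⟩
  have fac : ∀ (I : TypedFinSet X) (i : I.left),
      F.map (inj I i) ≫ app I = b.app ⟨I.hom i⟩ ≫ F'.map (inj I i) :=
    fun I i => (isColimitMapCofan F I).fac _ ⟨i⟩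
  refine ⟨ObjectProperty.homMk ⟨app, ?_⟩, ?_⟩
  · intro I I' f
    apply (isColimitMapCofan F I).hom_ext
    rintro ⟨i⟩
    show F.map (inj I i) ≫ F.map f ≫ app I' = F.map (inj I i) ≫ app I ≫ F'.map f
    have hb := map_eqToHom_comm (F := F) (F' := F') b (hom_app_eq f i)
      (single_congr (hom_app_eq f i))
    rw [← Category.assoc, ← F.map_comp, inj_comp, F.map_comp, Category.assoc,
      fac I' (f.left i), ← Category.assoc, hb, Category.assoc, ← F'.map_comp,
      ← inj_comp, F'.map_comp, ← Category.assoc, ← fac I i, Category.assoc]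
  · ext ⟨x⟩
    show app (TypedFinSet.single x) = b.app ⟨x⟩
    have h1 := fac (TypedFinSet.single x) PUnit.unit
    have e1 : F.map (inj (TypedFinSet.single x) PUnit.unit) =
        𝟙 (F.obj (TypedFinSet.single x)) := by
      rw [inj_single]; exact F.map_id _
    have e2 : F'.map (inj (TypedFinSet.single x) PUnit.unit) =
        𝟙 (F'.obj (TypedFinSet.single x)) := by
      rw [inj_single]; exact F'.map_id _
    rw [e1, e2] at h1
    exact ((Category.id_comp _).symm.trans h1).trans (Category.comp_id _)

lemma e_essSurj : (E X C).EssSurj := by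
  constructor
  intro G
  refine ⟨⟨ext G, extPreservesFiniteColimits G⟩, ⟨?_⟩⟩
  refine NatIso.ofComponents (fun x => ?_) ?_
  · exact
      { hom := Sigma.desc (fun _ => 𝟙 (G.obj x))
        inv := Sigma.ι (fun i : ((TypedFinSet.single x.as).left : Type u) =>
          G.obj ⟨(TypedFinSet.single x.as).hom i⟩) PUnit.unit
        hom_inv_id := by
          apply Sigma.hom_ext
          intro u
          cases u
          simp
          erw [Sigma.ι_desc_assoc, Category.id_comp]
        inv_hom_id := by erw [Sigma.ι_desc] }
  · rintro ⟨x⟩ ⟨y⟩ f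
    have hxy : x = y := Discrete.eq_of_hom f
    subst hxy
    have : f = 𝟙 (⟨x⟩ : Discrete X) := Subsingleton.elim _ _
    subst this
    simp

end Main
end TFSAux

/-- `FinSet ↓ X` is the free finite-colimit completion of the discrete category on `X`: for
a category `C` with finite colimits, evaluation at the one-element typed sets induces an
equivalence between the full subcategory of `(FinSet ↓ X) ⥤ C` spanned by the
finite-colimit-preserving functors and the functor category `Discrete X ⥤ C`. -/
theorem evaluation_finiteColimitPreserving_isEquivalence
    (X : Type u) (C : Type w) [Category.{v} C] [HasFiniteColimits C] :
    (ObjectProperty.ι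
        (fun F : TypedFinSet X ⥤ C => PreservesFiniteColimits F) ⋙
      (Functor.whiskeringLeft (Discrete X) (TypedFinSet X) C).obj
        (Discrete.functor fun x => TypedFinSet.single x)).IsEquivalence := by
  exact { faithful := TFSAux.e_faithful X C
          full := TFSAux.e_full X C
          essSurj := TFSAux.e_essSurj X C }
end
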